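/- arXiv:1607.02988 — 7 statements merged into one kernel-verified Lean document; each statement's English description precedes it below -/
import Mathlib

section
/- For a surjective function π : E → A, the space Sec(π) with distance δ(f,g) = {a ∈ A | f(a) ≠ g(a)} is spherically complete: every chain of balls {B(f_i, α_i) | i ∈ I} has nonempty intersection. -/
/-!
Two balls of a chain are nested, and the centre of the smaller one lies in the larger one, so
any two centres `f i`, `f j` agree outside `α i ∪ α j`. Hence the centres glue to a single
section that agrees with `f i` off `α i` for every `i` (and is an arbitrary section, which exists
by surjectivity, on the points lying in every radius); it lies in every ball.
-/

abbrev Sec {E A : Type*} (π : E → A) : Type _ := {s : A → E // ∀ a, π (s a) = a}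

namespace Sec

variable {E A : Type*} {π : E → A}

def ball (f : Sec π) (α : Set A) : Set (Sec π) :=
  {g | {a | f.1 a ≠ g.1 a} ⊆ α}

theorem mem_ball_self (f : Sec π) (α : Set A) : f ∈ ball f α :=
  fun _ ha => absurd rfl ha

theorem apply_eq_of_ball_subset {f g : Sec π} {α β : Set A} (h : ball f α ⊆ ball g β)
    {a : A} (ha : a ∉ β) : f.1 a = g.1 a := by
  by_contra hne
  exact ha (h (mem_ball_self f α) (Ne.symm hne))

theorem apply_eq_of_ball_chain {f g : Sec π} {α β : Set A}
    (h : ball f α ⊆ ball g β ∨ ball g β ⊆ ball f α) {a : A} (hα : a ∉ α) (hβ : a ∉ β) :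
    f.1 a = g.1 a :=
  h.elim (fun h => apply_eq_of_ball_subset h hβ) fun h => (apply_eq_of_ball_subset h hα).symm

theorem exists_glue (hπ : Function.Surjective π) {I : Type*} (f : I → Sec π) (α : I → Set A)
    (hcompat : ∀ i j a, a ∉ α i → a ∉ α j → (f i).1 a = (f j).1 a) :
    ∃ g : Sec π, ∀ i a, a ∉ α i → g.1 a = (f i).1 a := by
  classical
  let g : A → E := fun a =>
    if h : ∃ i, a ∉ α i then (f h.choose).1 a else Function.surjInv hπ a
  have hg : ∀ a, π (g a) = a := by
    intro a
    by_cases h : ∃ i, a ∉ α i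
    · simp only [g, dif_pos h, (f h.choose).2 a]
    · simp only [g, dif_neg h, Function.surjInv_eq hπ a]
  refine ⟨⟨g, hg⟩, fun i a ha => ?_⟩
  have h : ∃ j, a ∉ α j := ⟨i, ha⟩
  simp only [g, dif_pos h]
  exact hcompat _ _ a h.choose_spec ha

end Sec

/-- The space of sections of a surjection π : E → A is spherically complete:
every chain of balls has nonempty intersection. -/
theorem stmt_4 {E A : Type*} (π : E → A) (hπ : Function.Surjective π)
    {I : Type*} (f : I → {s : A → E // ∀ a, π (s a) = a}) (α : I → Set A)
    (hchain : ∀ i j : I,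
      {g : {s : A → E // ∀ a, π (s a) = a} | {a : A | (f i).1 a ≠ g.1 a} ⊆ α i} ⊆
        {g : {s : A → E // ∀ a, π (s a) = a} | {a : A | (f j).1 a ≠ g.1 a} ⊆ α j} ∨
      {g : {s : A → E // ∀ a, π (s a) = a} | {a : A | (f j).1 a ≠ g.1 a} ⊆ α j} ⊆
        {g : {s : A → E // ∀ a, π (s a) = a} | {a : A | (f i).1 a ≠ g.1 a} ⊆ α i}) :
    (⋂ i : I,
      {g : {s : A → E // ∀ a, π (s a) = a} | {a : A | (f i).1 a ≠ g.1 a} ⊆ α i}).Nonempty := by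
  obtain ⟨g, hg⟩ := Sec.exists_glue hπ f α fun i j a hi hj =>
    Sec.apply_eq_of_ball_chain (hchain i j) hi hj
  refine ⟨g, Set.mem_iInter.2 fun i a hne => ?_⟩
  by_contra ha
  exact hne (hg i a ha).symm
end

section
/- Every reduced symmetric ultrametric space (X, δ) over P(A) admits an isometry into a space of sections: the map ψ sending f to the vector ⟨B(f, A∖{a})⟩_{a∈A} is an injective map into Sec(π), where π : Σ_{a∈A} D_a → A with D_a the set of balls B(f, A∖{a}), and it satisfies δ(ψ(f), ψ(g)) = δ(f,g). -/
/-!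
Two balls of the same radius α are equal exactly when their centres are at distance within α
(ultrametric triangle inequality one way, `f ∈ B(f, α)` the other). With α = A ∖ {a} this says that
the `a`-th coordinates of ψ f and ψ g differ exactly when `a ∈ δ f g`; injectivity then follows
from reducedness.
-/

namespace UltrametricSections

variable {A X : Type*} {δ : X → X → Set A}

def ball (δ : X → X → Set A) (f : X) (α : Set A) : Set X := {g | δ f g ⊆ α}

lemma mem_ball_self (h_refl : ∀ f, δ f f = ∅) (f : X) (α : Set A) : f ∈ ball δ f α := by
  simp [ball, h_refl]

lemma ball_subset_ball_of_dist_subset (h_tri : ∀ f g h, δ f g ⊆ δ f h ∪ δ h g)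
    {f g : X} {α : Set A} (h : δ f g ⊆ α) : ball δ g α ⊆ ball δ f α :=
  fun _ hx => (h_tri _ _ g).trans (Set.union_subset h hx)

lemma ball_eq_ball_iff (h_refl : ∀ f, δ f f = ∅) (h_tri : ∀ f g h, δ f g ⊆ δ f h ∪ δ h g)
    (h_sym : ∀ f g, δ f g = δ g f) {f g : X} {α : Set A} :
    ball δ f α = ball δ g α ↔ δ f g ⊆ α := by
  constructor
  · intro h
    have hf : f ∈ ball δ g α := h ▸ mem_ball_self h_refl f α
    exact h_sym f g ▸ hf
  · intro h
    exact (ball_subset_ball_of_dist_subset h_tri (h_sym f g ▸ h)).antisymm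
      (ball_subset_ball_of_dist_subset h_tri h)

lemma subset_univ_diff_singleton_iff {s : Set A} {a : A} : s ⊆ Set.univ \ {a} ↔ a ∉ s := by
  rw [← Set.compl_eq_univ_sdiff, Set.subset_compl_singleton_iff]

lemma setOf_ball_ne_ball_eq (h_refl : ∀ f, δ f f = ∅) (h_tri : ∀ f g h, δ f g ⊆ δ f h ∪ δ h g)
    (h_sym : ∀ f g, δ f g = δ g f) (f g : X) :
    {a | ball δ f (Set.univ \ {a}) ≠ ball δ g (Set.univ \ {a})} = δ f g := by
  ext a
  change ¬ _ ↔ _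
  rw [ball_eq_ball_iff h_refl h_tri h_sym, subset_univ_diff_singleton_iff, not_not]

end UltrametricSections

open UltrametricSections in
/-- Every reduced symmetric ultrametric space over P(A) embeds isometrically
into a space of sections, via ψ(f) = ⟨B(f, A∖{a})⟩_{a∈A}. -/
theorem stmt_6 {A X : Type*} (δ : X → X → Set A)
    (h_refl : ∀ f : X, δ f f = ∅)
    (h_tri : ∀ f g h : X, δ f g ⊆ δ f h ∪ δ h g)
    (h_red : ∀ f g : X, δ f g = ∅ → f = g)
    (h_sym : ∀ f g : X, δ f g = δ g f) :
    ∃ ψ : X → (A → Set X),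
      (∀ (f : X) (a : A), ψ f a = {g : X | δ f g ⊆ Set.univ \ {a}}) ∧
      (∀ (f : X) (a : A), ψ f a ∈ {s : Set X | ∃ g : X, s = {x : X | δ g x ⊆ Set.univ \ {a}}}) ∧
      Function.Injective ψ ∧
      (∀ f g : X, {a : A | ψ f a ≠ ψ g a} = δ f g) := by
  have h_isometry := setOf_ball_ne_ball_eq h_refl h_tri h_sym
  refine ⟨fun f a => ball δ f (Set.univ \ {a}), fun _ _ => rfl, fun f _ => ⟨f, rfl⟩,
    fun f g hfg => h_red f g ?_, h_isometry⟩
  rw [← h_isometry f g]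
  simp [congrFun hfg]
end

section
/- A continuous subspace Y of a pairwise complete reduced symmetric space X is itself pairwise complete. -/
/-! A midpoint `h` between `f` and `g` can be chosen with `δ f h` and `δ h g` disjoint, by splitting
`δ f g` along `α` before applying pairwise completeness. Then `⋂ y ∈ Y, δ h y ⊆ δ h f ∩ δ h g = ∅`,
so continuity of `Y` puts `h` in `Y`. -/

theorem exists_midpoint_disjoint {A X : Type*} {δ : X → X → Set A}
    (h_pc : ∀ (f g : X) (α β : Set A), δ f g ⊆ α ∪ β →
      ∃ h : X, δ f h ⊆ α ∧ δ h g ⊆ β)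
    {f g : X} {α β : Set A} (hfg : δ f g ⊆ α ∪ β) :
    ∃ h : X, δ f h ⊆ α ∧ δ h g ⊆ β ∧ Disjoint (δ f h) (δ h g) := by
  obtain ⟨h, hfh, hhg⟩ := h_pc f g (δ f g ∩ α) (δ f g \ α) (by
    rw [Set.inter_union_sdiff])
  refine ⟨h, hfh.trans Set.inter_subset_right, fun x hx => ?_, ?_⟩
  · obtain ⟨hx_fg, hx_α⟩ := hhg hx
    exact (hfg hx_fg).resolve_left hx_α
  · exact Set.disjoint_of_subset hfh hhg
      (Set.disjoint_sdiff_right.mono_left Set.inter_subset_right)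

theorem mem_of_disjoint_dist {A X : Type*} {δ : X → X → Set A} {Y : Set X}
    (h_cont : ∀ f : X, (⋂ g ∈ Y, δ f g) = ∅ → f ∈ Y)
    {f g h : X} (hf : f ∈ Y) (hg : g ∈ Y) (hdisj : Disjoint (δ h f) (δ h g)) : h ∈ Y :=
  h_cont h <| Set.subset_empty_iff.mp fun _ hx =>
    hdisj.le_bot ⟨Set.mem_iInter₂.mp hx f hf, Set.mem_iInter₂.mp hx g hg⟩

theorem stmt_8_general {A X : Type*} (δ : X → X → Set A)
    (h_sym : ∀ f g : X, δ f g = δ g f)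
    (h_pc : ∀ (f g : X) (α β : Set A), δ f g ⊆ α ∪ β →
      ∃ h : X, δ f h ⊆ α ∧ δ h g ⊆ β)
    (Y : Set X)
    (h_cont : ∀ f : X, (⋂ g ∈ Y, δ f g) = ∅ → f ∈ Y) :
    ∀ f ∈ Y, ∀ g ∈ Y, ∀ α β : Set A, δ f g ⊆ α ∪ β →
      ∃ h ∈ Y, δ f h ⊆ α ∧ δ h g ⊆ β := by
  intro f hf g hg α β hfg
  obtain ⟨h, hfh, hhg, hdisj⟩ := exists_midpoint_disjoint h_pc hfg
  rw [h_sym f h] at hdisj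
  exact ⟨h, mem_of_disjoint_dist h_cont hf hg hdisj, hfh, hhg⟩

/-- A continuous subspace of a pairwise complete space is pairwise complete. -/
theorem stmt_8 {A X : Type*} (δ : X → X → Set A)
    (h_refl : ∀ f : X, δ f f = ∅)
    (h_tri : ∀ f g h : X, δ f g ⊆ δ f h ∪ δ h g)
    (h_red : ∀ f g : X, δ f g = ∅ → f = g)
    (h_sym : ∀ f g : X, δ f g = δ g f)
    (h_pc : ∀ (f g : X) (α β : Set A), δ f g ⊆ α ∪ β →
      ∃ h : X, δ f h ⊆ α ∧ δ h g ⊆ β)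
    (Y : Set X)
    (h_cont : ∀ f : X, (⋂ g ∈ Y, δ f g) = ∅ → f ∈ Y) :
    ∀ f ∈ Y, ∀ g ∈ Y, ∀ α β : Set A, δ f g ⊆ α ∪ β →
      ∃ h ∈ Y, δ f h ⊆ α ∧ δ h g ⊆ β :=
  stmt_8_general δ h_sym h_pc Y h_cont
end

section
/- If Y is a pairwise complete subspace of a space X, then for each f ∈ X the family {α ⊆ A | B(f,α) ∩ Y ≠ ∅} is closed under finite (binary) intersections. -/
/-! Given centres `a ∈ B(f,α) ∩ Y` and `b ∈ B(f,β) ∩ Y`, the ultrametric inequality through `f`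
gives `δ(a,b) ⊆ α ∪ β`. Pairwise completeness then yields `h ∈ Y` with `δ(a,h) ⊆ α` and
`δ(h,b) ⊆ β`, and a second use of the ultrametric inequality puts `h` in `B(f,α) ∩ B(f,β)`. -/

section UltrametricBalls

variable {A X : Type*} {δ : X → X → Set A}

theorem dist_subset_trans (h_tri : ∀ f g h : X, δ f g ⊆ δ f h ∪ δ h g) {f g h : X}
    {α : Set A} (hfg : δ f g ⊆ α) (hgh : δ g h ⊆ α) : δ f h ⊆ α :=
  (h_tri f h g).trans (Set.union_subset hfg hgh)

theorem dist_subset_union_of_dist_subset (h_tri : ∀ f g h : X, δ f g ⊆ δ f h ∪ δ h g)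
    (h_sym : ∀ f g : X, δ f g = δ g f) {f a b : X} {α β : Set A}
    (ha : δ f a ⊆ α) (hb : δ f b ⊆ β) : δ a b ⊆ α ∪ β :=
  (h_tri a b f).trans (Set.union_subset_union (h_sym a f ▸ ha) hb)

end UltrametricBalls

theorem stmt_10_general {A X : Type*} (δ : X → X → Set A)
    (h_tri : ∀ f g h : X, δ f g ⊆ δ f h ∪ δ h g)
    (h_sym : ∀ f g : X, δ f g = δ g f)
    (Y : Set X)
    (h_pcY : ∀ f ∈ Y, ∀ g ∈ Y, ∀ α β : Set A, δ f g ⊆ α ∪ β →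
      ∃ h ∈ Y, δ f h ⊆ α ∧ δ h g ⊆ β)
    (f : X) (α β : Set A)
    (hα : ({g : X | δ f g ⊆ α} ∩ Y).Nonempty)
    (hβ : ({g : X | δ f g ⊆ β} ∩ Y).Nonempty) :
    ({g : X | δ f g ⊆ α ∩ β} ∩ Y).Nonempty := by
  obtain ⟨a, ha, haY⟩ := hα
  obtain ⟨b, hb, hbY⟩ := hβ
  obtain ⟨h, hY, hah, hhb⟩ :=
    h_pcY a haY b hbY α β (dist_subset_union_of_dist_subset h_tri h_sym ha hb)
  exact ⟨h, Set.subset_inter (dist_subset_trans h_tri ha hah)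
    (dist_subset_trans h_tri hb (h_sym h b ▸ hhb)), hY⟩

/-- If Y is a pairwise complete subspace of X then, for each f ∈ X, the family
{α ⊆ A | B(f,α) ∩ Y ≠ ∅} is closed under binary intersections. -/
theorem stmt_10 {A X : Type*} (δ : X → X → Set A)
    (h_refl : ∀ f : X, δ f f = ∅)
    (h_tri : ∀ f g h : X, δ f g ⊆ δ f h ∪ δ h g)
    (h_red : ∀ f g : X, δ f g = ∅ → f = g)
    (h_sym : ∀ f g : X, δ f g = δ g f)
    (Y : Set X)
    (h_pcY : ∀ f ∈ Y, ∀ g ∈ Y, ∀ α β : Set A, δ f g ⊆ α ∪ β →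
      ∃ h ∈ Y, δ f h ⊆ α ∧ δ h g ⊆ β)
    (f : X) (α β : Set A)
    (hα : ({g : X | δ f g ⊆ α} ∩ Y).Nonempty)
    (hβ : ({g : X | δ f g ⊆ β} ∩ Y).Nonempty) :
    ({g : X | δ f g ⊆ α ∩ β} ∩ Y).Nonempty :=
  stmt_10_general δ h_tri h_sym Y h_pcY f α β hα hβ
end

section
/- For any subset Y of a space X, the maps ν : Sub(X) → Modules(X) (where ν_Y(f) = ⋂_{g∈Y} δ(f,g)) and S : Modules(X) → Sub(X) (where S_v = {x | v(x) = ∅}) form a Galois adjunction: Y ⊆ S_{ν_Y} and ν_{S_v} ≤ v, where modules are ordered by reverse pointwise inclusion and subspaces by inclusion. -/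
theorem biInter_dist_eq_empty_of_mem {A X : Type*} {δ : X → X → Set A}
    (h_refl : ∀ f : X, δ f f = ∅) {Y : Set X} {x : X} (hx : x ∈ Y) :
    (⋂ g ∈ Y, δ x g) = ∅ :=
  Set.subset_empty_iff.mp (h_refl x ▸ Set.biInter_subset_of_mem hx)

theorem module_subset_biInter_dist_zeroSet {A X : Type*} {δ : X → X → Set A}
    {v : X → Set A} (hv : ∀ f g : X, v f ⊆ δ f g ∪ v g) (f : X) :
    v f ⊆ ⋂ g ∈ {x : X | v x = ∅}, δ f g :=
  Set.subset_iInter₂ fun g (hg : v g = ∅) => by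
    simpa only [hg, Set.union_empty] using hv f g

theorem stmt_13_general {A X : Type*} (δ : X → X → Set A)
    (h_refl : ∀ f : X, δ f f = ∅) :
    (∀ Y : Set X, Y ⊆ {x : X | (⋂ g ∈ Y, δ x g) = ∅}) ∧
    (∀ v : X → Set A, (∀ f g : X, v f ⊆ δ f g ∪ v g) →
      ∀ f : X, v f ⊆ ⋂ g ∈ {x : X | v x = ∅}, δ f g) :=
  ⟨fun _ _ hx => biInter_dist_eq_empty_of_mem h_refl hx,
    fun _ hv => module_subset_biInter_dist_zeroSet hv⟩

/-- The maps ν and S form a Galois adjunction: Y ⊆ S_{ν_Y} and ν_{S_v} ≤ v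
(i.e. v f ⊆ ν_{S_v} f), modules being ordered by reverse pointwise inclusion. -/
theorem stmt_13 {A X : Type*} (δ : X → X → Set A)
    (h_refl : ∀ f : X, δ f f = ∅)
    (h_tri : ∀ f g h : X, δ f g ⊆ δ f h ∪ δ h g)
    (h_red : ∀ f g : X, δ f g = ∅ → f = g)
    (h_sym : ∀ f g : X, δ f g = δ g f) :
    (∀ Y : Set X, Y ⊆ {x : X | (⋂ g ∈ Y, δ x g) = ∅}) ∧
    (∀ v : X → Set A, (∀ f g : X, v f ⊆ δ f g ∪ v g) →
      ∀ f : X, v f ⊆ ⋂ g ∈ {x : X | v x = ∅}, δ f g) :=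
  stmt_13_general δ h_refl
end

section
/- A subspace Y of X is continuous if and only if S_{ν_Y} = Y. Consequently, for any Y ⊆ X, S_{ν_Y} is the least continuous subspace of X containing Y. -/
/-!
Reflexivity gives `Y ⊆ S_{ν_Y}`; the ultrametric triangle inequality shows that enlarging
`Y` to `S_{ν_Y}` does not shrink `ν_Y`: if `a ∈ ν_Y(f)` and `g ∈ S_{ν_Y}`, some `h ∈ Y` has
`a ∉ δ(g,h)`, and then `a ∈ δ(f,h)` forces `a ∈ δ(f,g)`. Hence `ν_{S_{ν_Y}} = ν_Y`, so
`S_{ν_Y}` is continuous, and it lies in every continuous `Z ⊇ Y` because `ν` is antitone in `Y`.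
-/

namespace PowersetUltrametric

variable {A X : Type*} (δ : X → X → Set A)

def nu (Y : Set X) (f : X) : Set A := ⋂ g ∈ Y, δ f g

def zeroSet (v : X → Set A) : Set X := {x | v x = ∅}

def IsContinuous (Y : Set X) : Prop := ∀ f, nu δ Y f = ∅ → f ∈ Y

variable {δ}

theorem nu_anti {Y Z : Set X} (h : Y ⊆ Z) (f : X) : nu δ Z f ⊆ nu δ Y f :=
  Set.biInter_subset_biInter_left h

theorem subset_zeroSet_nu (h_refl : ∀ f, δ f f = ∅) (Y : Set X) : Y ⊆ zeroSet (nu δ Y) :=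
  fun f hf => Set.subset_eq_empty (Set.biInter_subset_of_mem hf) (h_refl f)

theorem nu_zeroSet_nu (h_refl : ∀ f, δ f f = ∅) (h_tri : ∀ f g h, δ f g ⊆ δ f h ∪ δ h g)
    (Y : Set X) : nu δ (zeroSet (nu δ Y)) = nu δ Y := by
  funext f
  refine (nu_anti (subset_zeroSet_nu h_refl Y) f).antisymm fun a ha => ?_
  simp only [nu, Set.mem_iInter] at ha ⊢
  intro g hg
  obtain ⟨h, hY, hah⟩ : ∃ h ∈ Y, a ∉ δ g h := by
    by_contra! hall
    exact (Set.eq_empty_iff_forall_notMem.mp hg) a (Set.mem_iInter₂.mpr hall)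
  exact (h_tri f h g (ha h hY)).resolve_right hah

theorem isContinuous_zeroSet_nu (h_refl : ∀ f, δ f f = ∅)
    (h_tri : ∀ f g h, δ f g ⊆ δ f h ∪ δ h g) (Y : Set X) :
    IsContinuous δ (zeroSet (nu δ Y)) := by
  intro f hf
  rwa [nu_zeroSet_nu h_refl h_tri] at hf

theorem isContinuous_iff_zeroSet_nu_eq (h_refl : ∀ f, δ f f = ∅) (Y : Set X) :
    IsContinuous δ Y ↔ zeroSet (nu δ Y) = Y :=
  ⟨fun hY => Set.Subset.antisymm (fun f hf => hY f hf) (subset_zeroSet_nu h_refl Y),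
    fun hY _ hf => hY ▸ hf⟩

theorem zeroSet_nu_subset {Y Z : Set X} (hZ : IsContinuous δ Z) (hYZ : Y ⊆ Z) :
    zeroSet (nu δ Y) ⊆ Z :=
  fun f hf => hZ f (Set.subset_eq_empty (nu_anti hYZ f) hf)

end PowersetUltrametric

open PowersetUltrametric in
theorem stmt_15_general {A X : Type*} (δ : X → X → Set A)
    (h_refl : ∀ f : X, δ f f = ∅)
    (h_tri : ∀ f g h : X, δ f g ⊆ δ f h ∪ δ h g) :
    (∀ Y : Set X,
      ((∀ f : X, (⋂ g ∈ Y, δ f g) = ∅ → f ∈ Y) ↔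
        {x : X | (⋂ g ∈ Y, δ x g) = ∅} = Y)) ∧
    (∀ Y : Set X,
      Y ⊆ {x : X | (⋂ g ∈ Y, δ x g) = ∅} ∧
      (∀ f : X, (⋂ g ∈ {x : X | (⋂ g' ∈ Y, δ x g') = ∅}, δ f g) = ∅ →
        f ∈ {x : X | (⋂ g' ∈ Y, δ x g') = ∅}) ∧
      (∀ Z : Set X, (∀ f : X, (⋂ g ∈ Z, δ f g) = ∅ → f ∈ Z) → Y ⊆ Z →
        {x : X | (⋂ g ∈ Y, δ x g) = ∅} ⊆ Z)) :=
  ⟨isContinuous_iff_zeroSet_nu_eq h_refl, fun Y =>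
    ⟨subset_zeroSet_nu h_refl Y, isContinuous_zeroSet_nu h_refl h_tri Y,
      fun _ hZ hYZ => zeroSet_nu_subset hZ hYZ⟩⟩

/-- Y is continuous iff S_{ν_Y} = Y; consequently S_{ν_Y} is the least
continuous subspace containing Y. -/
theorem stmt_15 {A X : Type*} (δ : X → X → Set A)
    (h_refl : ∀ f : X, δ f f = ∅)
    (h_tri : ∀ f g h : X, δ f g ⊆ δ f h ∪ δ h g)
    (h_red : ∀ f g : X, δ f g = ∅ → f = g)
    (h_sym : ∀ f g : X, δ f g = δ g f) :
    (∀ Y : Set X,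
      ((∀ f : X, (⋂ g ∈ Y, δ f g) = ∅ → f ∈ Y) ↔
        {x : X | (⋂ g ∈ Y, δ x g) = ∅} = Y)) ∧
    (∀ Y : Set X,
      Y ⊆ {x : X | (⋂ g ∈ Y, δ x g) = ∅} ∧
      (∀ f : X, (⋂ g ∈ {x : X | (⋂ g' ∈ Y, δ x g') = ∅}, δ f g) = ∅ →
        f ∈ {x : X | (⋂ g' ∈ Y, δ x g') = ∅}) ∧
      (∀ Z : Set X, (∀ f : X, (⋂ g ∈ Z, δ f g) = ∅ → f ∈ Z) → Y ⊆ Z →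
        {x : X | (⋂ g ∈ Y, δ x g) = ∅} ⊆ Z)) :=
  stmt_15_general δ h_refl h_tri
end

section
/- Let X be a pairwise complete reduced symmetric space over P(A) with A nonempty. A module v on X satisfies ν_{S_v} = v if and only if either v(f) = A for all f ∈ X, or v(f) = ∅ for some f ∈ X. -/
/-!
Every module vanishing at g lies below δ(·, g), so v ⊆ ν_{S_v} always. Conversely, if v vanishes
at some g₀, split δ(f, g₀) ⊆ v(f) ∪ v(f)ᶜ by pairwise completeness: the midpoint h satisfies
v(h) ⊆ δ(h, f) ∪ v(f) ⊆ v(f) and v(h) ⊆ δ(h, g₀) ⊆ v(f)ᶜ, so h ∈ S_v and ν_{S_v}(f) ⊆ δ(f, h) ⊆ v(f).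
If v vanishes nowhere, ν_{S_v} is the empty intersection A, and the equation says v ≡ A.
-/

section Module

variable {A X : Type*} {δ : X → X → Set A} {v : X → Set A}

theorem subset_biInter_zeroSet_of_module (h_mod : ∀ f g : X, v f ⊆ δ f g ∪ v g) (f : X) :
    v f ⊆ ⋂ g ∈ {x : X | v x = ∅}, δ f g := by
  refine Set.subset_iInter₂ fun g (hg : v g = ∅) => ?_
  simpa [hg] using h_mod f g

theorem exists_zero_subset_of_module (h_sym : ∀ f g : X, δ f g = δ g f)
    (h_pc : ∀ (f g : X) (α β : Set A), δ f g ⊆ α ∪ β → ∃ h : X, δ f h ⊆ α ∧ δ h g ⊆ β)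
    (h_mod : ∀ f g : X, v f ⊆ δ f g ∪ v g) {g₀ : X} (hg₀ : v g₀ = ∅) (f : X) :
    ∃ h : X, δ f h ⊆ v f ∧ v h = ∅ := by
  obtain ⟨h, hfh, hhg⟩ := h_pc f g₀ (v f) (v f)ᶜ (by simp)
  have h_le : v h ⊆ v f := by
    simpa [h_sym h f, Set.union_eq_self_of_subset_left hfh] using h_mod h f
  have h_le_compl : v h ⊆ (v f)ᶜ := by
    simpa [hg₀] using (h_mod h g₀).trans (Set.union_subset_union_left _ hhg)
  exact ⟨h, hfh, Set.subset_empty_iff.mp fun a ha => h_le_compl ha (h_le ha)⟩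

theorem biInter_zeroSet_eq_of_module (h_sym : ∀ f g : X, δ f g = δ g f)
    (h_pc : ∀ (f g : X) (α β : Set A), δ f g ⊆ α ∪ β → ∃ h : X, δ f h ⊆ α ∧ δ h g ⊆ β)
    (h_mod : ∀ f g : X, v f ⊆ δ f g ∪ v g) {g₀ : X} (hg₀ : v g₀ = ∅) (f : X) :
    ⋂ g ∈ {x : X | v x = ∅}, δ f g = v f := by
  obtain ⟨h, hfh, hh⟩ := exists_zero_subset_of_module h_sym h_pc h_mod hg₀ f
  exact ((Set.biInter_subset_of_mem (s := {x | v x = ∅}) hh).trans hfh).antisymm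
    (subset_biInter_zeroSet_of_module h_mod f)

end Module

theorem stmt_16_general {A X : Type*} (δ : X → X → Set A)
    (h_sym : ∀ f g : X, δ f g = δ g f)
    (h_pc : ∀ (f g : X) (α β : Set A), δ f g ⊆ α ∪ β →
      ∃ h : X, δ f h ⊆ α ∧ δ h g ⊆ β)
    (v : X → Set A) (h_mod : ∀ f g : X, v f ⊆ δ f g ∪ v g) :
    (∀ f : X, (⋂ g ∈ {x : X | v x = ∅}, δ f g) = v f) ↔
    ((∀ f : X, v f = Set.univ) ∨ (∃ f : X, v f = ∅)) := by
  by_cases h_zero : ∃ f : X, v f = ∅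
  · obtain ⟨g₀, hg₀⟩ := h_zero
    exact iff_of_true (biInter_zeroSet_eq_of_module h_sym h_pc h_mod hg₀) (Or.inr ⟨g₀, hg₀⟩)
  · have h_empty : {x : X | v x = ∅} = ∅ :=
      Set.eq_empty_of_forall_notMem fun x hx => h_zero ⟨x, hx⟩
    simp only [h_empty, Set.biInter_empty, h_zero, or_false, eq_comm]

/-- In a pairwise complete space with A nonempty, a module v satisfies
ν_{S_v} = v iff v is constantly A or v vanishes somewhere. -/
theorem stmt_16 {A X : Type*} [Nonempty A] (δ : X → X → Set A)
    (h_refl : ∀ f : X, δ f f = ∅)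
    (h_tri : ∀ f g h : X, δ f g ⊆ δ f h ∪ δ h g)
    (h_red : ∀ f g : X, δ f g = ∅ → f = g)
    (h_sym : ∀ f g : X, δ f g = δ g f)
    (h_pc : ∀ (f g : X) (α β : Set A), δ f g ⊆ α ∪ β →
      ∃ h : X, δ f h ⊆ α ∧ δ h g ⊆ β)
    (v : X → Set A) (h_mod : ∀ f g : X, v f ⊆ δ f g ∪ v g) :
    (∀ f : X, (⋂ g ∈ {x : X | v x = ∅}, δ f g) = v f) ↔
    ((∀ f : X, v f = Set.univ) ∨ (∃ f : X, v f = ∅)) :=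
  stmt_16_general δ h_sym h_pc v h_mod
end
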